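/- arXiv:1907.10316 — 2 statements merged into one kernel-verified Lean document; each statement's English description precedes it below -/
import Mathlib

section
/- For the Rössler system with parameters a, b, c ∈ ℝ, the observability map Φ_y = (y, L_f y, L_f² y) : ℝ³ → ℝ³ obtained by measuring the variable y is a linear map, explicitly Φ_y(x, y, z) = (y, x + a·y, a·x + (a² − 1)·y − z), and its determinant equals 1; in particular Φ_y is a linear equivalence of ℝ³ and the Rössler system is fully observable from y everywhere in state space. -/
/-- The `k`-th Lie derivative of a scalar function `h` along a vector field `F`. -/
noncomputable def lieD {E : Type*} [NormedAddCommGroup E] [NormedSpace ℝ E]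
    (F : E → E) (k : ℕ) (h : E → ℝ) : E → ℝ :=
  match k with
  | 0 => h
  | k + 1 => fun p => fderiv ℝ (lieD F k h) p (F p)

/-- The observability determinant of a map `Φ` at a point `p`:
the determinant of the Jacobian (Fréchet derivative) of `Φ` at `p`. -/
noncomputable def obsDet {E : Type*} [NormedAddCommGroup E] [NormedSpace ℝ E]
    (Φ : E → E) (p : E) : ℝ :=
  LinearMap.det ((fderiv ℝ Φ p).toLinearMap)

/-- The Rössler vector field with parameters `a b c`, coordinates `(x, y, z)`. -/
def rossler (a b c : ℝ) (p : Fin 3 → ℝ) : Fin 3 → ℝ :=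
  ![-p 1 - p 2, p 0 + a * p 1, b + p 2 * (p 0 - c)]

/-- Observability map obtained by measuring the variable `y` of the Rössler system:
`Φ_y = (y, L_f y, L_f² y)`. -/
noncomputable def PhiY (a b c : ℝ) (q : Fin 3 → ℝ) : Fin 3 → ℝ :=
  ![lieD (rossler a b c) 0 (fun r => r 1) q,
    lieD (rossler a b c) 1 (fun r => r 1) q,
    lieD (rossler a b c) 2 (fun r => r 1) q]

lemma lie1 (a b c : ℝ) (q : Fin 3 → ℝ) :
    lieD (rossler a b c) 1 (fun r => r 1) q = q 0 + a * q 1 := by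
  show fderiv ℝ (lieD (rossler a b c) 0 (fun r => r 1)) q (rossler a b c q) = _
  have heq : lieD (rossler a b c) 0 (fun r => r 1) = fun r : Fin 3 → ℝ => r 1 := rfl
  rw [heq, (hasFDerivAt_apply 1 q).fderiv]
  simp [rossler]

lemma lie1_fun (a b c : ℝ) :
    lieD (rossler a b c) 1 (fun r => r 1) = fun q => q 0 + a * q 1 :=
  funext (lie1 a b c)

lemma lie2 (a b c : ℝ) (q : Fin 3 → ℝ) :
    lieD (rossler a b c) 2 (fun r => r 1) q = a * q 0 + (a ^ 2 - 1) * q 1 - q 2 := by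
  show fderiv ℝ (lieD (rossler a b c) 1 (fun r => r 1)) q (rossler a b c q) = _
  rw [lie1_fun]
  have h : HasFDerivAt (fun q : Fin 3 → ℝ => q 0 + a * q 1)
      ((ContinuousLinearMap.proj 0 : (Fin 3 → ℝ) →L[ℝ] ℝ)
        + a • (ContinuousLinearMap.proj 1 : (Fin 3 → ℝ) →L[ℝ] ℝ)) q :=
    (hasFDerivAt_apply 0 q).add ((hasFDerivAt_apply 1 q).const_mul a)
  rw [h.fderiv]
  simp [rossler]
  ring

lemma phi_eq (a b c : ℝ) (q : Fin 3 → ℝ) :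
    PhiY a b c q = ![q 1, q 0 + a * q 1, a * q 0 + (a ^ 2 - 1) * q 1 - q 2] := by
  unfold PhiY
  rw [lie1, lie2]
  rfl

/-- `Φ_y` is the linear map `(x, y, z) ↦ (y, x + a·y, a·x + (a² - 1)·y - z)`, its
observability determinant is identically `1`, and it is a linear equivalence of `ℝ³`:
the Rössler system is fully observable from `y` everywhere. -/
theorem rossler_obsDet_y (a b c : ℝ) :
    (∀ q : Fin 3 → ℝ,
      PhiY a b c q = ![q 1, q 0 + a * q 1, a * q 0 + (a ^ 2 - 1) * q 1 - q 2]) ∧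
    IsLinearMap ℝ (PhiY a b c) ∧
    (∀ p : Fin 3 → ℝ, obsDet (PhiY a b c) p = 1) ∧
    Function.Bijective (PhiY a b c) := by
  set M : Matrix (Fin 3) (Fin 3) ℝ := !![0, 1, 0; 1, a, 0; a, a ^ 2 - 1, -1] with hM
  set L : (Fin 3 → ℝ) →L[ℝ] (Fin 3 → ℝ) := (Matrix.toLin' M).toContinuousLinearMap with hL
  have hPL : PhiY a b c = ⇑L := by
    funext q
    rw [phi_eq]
    funext i
    fin_cases i <;>
      simp [hL, hM, Matrix.toLin'_apply, Matrix.mulVec, dotProduct,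
        Fin.sum_univ_three] <;> ring
  have hdetM : M.det = 1 := by
    simp [hM, Matrix.det_fin_three]
  refine ⟨phi_eq a b c, ?_, ?_, ?_⟩
  · rw [hPL]
    exact ⟨L.map_add, L.map_smul⟩
  · intro p
    rw [obsDet, hPL, L.fderiv]
    have : (L.toLinearMap : (Fin 3 → ℝ) →ₗ[ℝ] (Fin 3 → ℝ)) = Matrix.toLin' M := by
      ext q : 1; rfl
    rw [this, LinearMap.det_toLin', hdetM]
  · rw [Function.bijective_iff_has_inverse]
    refine ⟨fun u => ![u 1 - a * u 0, u 0, a * u 1 - u 0 - u 2], ?_, ?_⟩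
    · intro q
      rw [phi_eq]
      funext i
      fin_cases i <;> simp <;> ring
    · intro u
      rw [phi_eq]
      funext i
      fin_cases i <;> simp <;> ring
end

section
/- For the dyad of Rössler systems coupled via the variable y with coupling strength ρ, let Φ : ℝ⁶ → ℝ⁶ be the observability map obtained by measuring x₁ and y₁ at node 1, namely Φ = (x₁, L_F x₁, y₁, L_F y₁, L_F² y₁, L_F³ y₁). Then the observability determinant det DΦ(p) equals ρ³ at every point p ∈ ℝ⁶; in particular, for ρ ≠ 0 the dyad is fully observable from measurements made at a single node. -/
/-- Dyad of Rössler systems coupled via the variable `y` with coupling strength `ρ`;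
coordinates `(x₁, y₁, z₁, x₂, y₂, z₂)`. -/
def dyadY (a b c ρ : ℝ) (p : Fin 6 → ℝ) : Fin 6 → ℝ :=
  ![-p 1 - p 2,
    p 0 + a * p 1 + ρ * (p 4 - p 1),
    b + p 2 * (p 0 - c),
    -p 4 - p 5,
    p 3 + a * p 4 + ρ * (p 1 - p 4),
    b + p 5 * (p 3 - c)]

/-- Observability map measuring `x₁` and `y₁` at node 1:
`Φ = (x₁, L_F x₁, y₁, L_F y₁, L_F² y₁, L_F³ y₁)`. -/
noncomputable def PhiX2Y4 (F : (Fin 6 → ℝ) → (Fin 6 → ℝ)) (q : Fin 6 → ℝ) : Fin 6 → ℝ :=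
  ![lieD F 0 (fun r => r 0) q,
    lieD F 1 (fun r => r 0) q,
    lieD F 0 (fun r => r 1) q,
    lieD F 1 (fun r => r 1) q,
    lieD F 2 (fun r => r 1) q,
    lieD F 3 (fun r => r 1) q]

/-! ### Auxiliary explicit functions and derivatives -/

@[simp] lemma vecCons_val_five {α : Type*} (x : α) (s : Fin 5 → α) :
    Matrix.vecCons x s 5 = s 4 := rfl
@[simp] lemma vecCons_val_four' {α : Type*} (x : α) (s : Fin 4 → α) :
    Matrix.vecCons x s 4 = s 3 := rfl
@[simp] lemma vecCons_val_three' {α : Type*} (x : α) (s : Fin 3 → α) :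
    Matrix.vecCons x s 3 = s 2 := rfl
@[simp] lemma vecCons_val_two' {α : Type*} (x : α) (s : Fin 2 → α) :
    Matrix.vecCons x s 2 = s 1 := rfl
@[simp] lemma vecCons_val_one' {α : Type*} (x : α) (s : Fin 1 → α) :
    Matrix.vecCons x s 1 = s 0 := rfl

noncomputable abbrev prj (i : Fin 6) : (Fin 6 → ℝ) →L[ℝ] ℝ := ContinuousLinearMap.proj i

def L1f (a ρ : ℝ) (p : Fin 6 → ℝ) : ℝ := p 0 + a * p 1 + ρ * (p 4 - p 1)
def M1f (a ρ : ℝ) (p : Fin 6 → ℝ) : ℝ := p 3 + a * p 4 + ρ * (p 1 - p 4)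
def L2f (a ρ : ℝ) (p : Fin 6 → ℝ) : ℝ :=
  (-p 1 - p 2) + a * L1f a ρ p + ρ * (M1f a ρ p - L1f a ρ p)
def M2f (a ρ : ℝ) (p : Fin 6 → ℝ) : ℝ :=
  (-p 4 - p 5) + a * M1f a ρ p + ρ * (L1f a ρ p - M1f a ρ p)
def F2f (b c : ℝ) (p : Fin 6 → ℝ) : ℝ := b + p 2 * (p 0 - c)
def L3f (a b c ρ : ℝ) (p : Fin 6 → ℝ) : ℝ :=
  (-L1f a ρ p - F2f b c p) + a * L2f a ρ p + ρ * (M2f a ρ p - L2f a ρ p)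

noncomputable def D3 (a ρ : ℝ) : (Fin 6 → ℝ) →L[ℝ] ℝ := prj 0 + a • prj 1 + ρ • (prj 4 - prj 1)
noncomputable def D3' (a ρ : ℝ) : (Fin 6 → ℝ) →L[ℝ] ℝ := prj 3 + a • prj 4 + ρ • (prj 1 - prj 4)
noncomputable def D4 (a ρ : ℝ) : (Fin 6 → ℝ) →L[ℝ] ℝ :=
  (-prj 1 - prj 2) + a • D3 a ρ + ρ • (D3' a ρ - D3 a ρ)
noncomputable def D4' (a ρ : ℝ) : (Fin 6 → ℝ) →L[ℝ] ℝ :=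
  (-prj 4 - prj 5) + a • D3' a ρ + ρ • (D3 a ρ - D3' a ρ)
noncomputable def Dq (c : ℝ) (p : Fin 6 → ℝ) : (Fin 6 → ℝ) →L[ℝ] ℝ :=
  p 2 • prj 0 + (p 0 - c) • prj 2
noncomputable def D5 (a c ρ : ℝ) (p : Fin 6 → ℝ) : (Fin 6 → ℝ) →L[ℝ] ℝ :=
  (-D3 a ρ - Dq c p) + a • D4 a ρ + ρ • (D4' a ρ - D4 a ρ)

lemma hD3 (a ρ : ℝ) (p : Fin 6 → ℝ) : HasFDerivAt (L1f a ρ) (D3 a ρ) p :=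
  ((hasFDerivAt_apply 0 p).add ((hasFDerivAt_apply 1 p).const_mul a)).add
    (((hasFDerivAt_apply 4 p).sub (hasFDerivAt_apply 1 p)).const_mul ρ)

lemma hM1 (a ρ : ℝ) (p : Fin 6 → ℝ) : HasFDerivAt (M1f a ρ) (D3' a ρ) p :=
  ((hasFDerivAt_apply 3 p).add ((hasFDerivAt_apply 4 p).const_mul a)).add
    (((hasFDerivAt_apply 1 p).sub (hasFDerivAt_apply 4 p)).const_mul ρ)

lemma hD4 (a ρ : ℝ) (p : Fin 6 → ℝ) : HasFDerivAt (L2f a ρ) (D4 a ρ) p :=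
  (((hasFDerivAt_apply 1 p).neg.sub (hasFDerivAt_apply 2 p)).add
      ((hD3 a ρ p).const_mul a)).add (((hM1 a ρ p).sub (hD3 a ρ p)).const_mul ρ)

lemma hM2 (a ρ : ℝ) (p : Fin 6 → ℝ) : HasFDerivAt (M2f a ρ) (D4' a ρ) p :=
  (((hasFDerivAt_apply 4 p).neg.sub (hasFDerivAt_apply 5 p)).add
      ((hM1 a ρ p).const_mul a)).add (((hD3 a ρ p).sub (hM1 a ρ p)).const_mul ρ)

lemma hDq (b c : ℝ) (p : Fin 6 → ℝ) : HasFDerivAt (F2f b c) (Dq c p) p :=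
  (((hasFDerivAt_apply 2 p).mul ((hasFDerivAt_apply 0 p).sub_const c))).const_add b

lemma hD5 (a b c ρ : ℝ) (p : Fin 6 → ℝ) : HasFDerivAt (L3f a b c ρ) (D5 a c ρ p) p :=
  (((hD3 a ρ p).neg.sub (hDq b c p)).add ((hD4 a ρ p).const_mul a)).add
    (((hM2 a ρ p).sub (hD4 a ρ p)).const_mul ρ)


set_option maxHeartbeats 1000000 in
def Mex (a c ρ : ℝ) (p : Fin 6 → ℝ) : Matrix (Fin 6) (Fin 6) ℝ :=
  !![1, 0, 0, 0, 0, 0;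
     0, -1, -1, 0, 0, 0;
     0, 1, 0, 0, 0, 0;
     1, a - ρ, 0, 0, ρ, 0;
     a - ρ, -1 + 2*ρ^2 - 2*a*ρ + a^2, -1, ρ, 2*a*ρ - 2*ρ^2, 0;
     -1 - p 2 + 2*ρ^2 - 2*a*ρ + a^2,
       2*ρ - 4*ρ^3 - 2*a + 6*a*ρ^2 - 3*a^2*ρ + a^3,
       -p 0 + ρ + c - a, 2*a*ρ - 2*ρ^2, -2*ρ + 4*ρ^3 - 6*a*ρ^2 + 3*a^2*ρ, -ρ]

set_option maxHeartbeats 1600000 in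
set_option maxRecDepth 8000 in
/-- For the `y`-coupled dyad of Rössler systems, the observability determinant of
`Φ = (x₁, L_F x₁, y₁, L_F y₁, L_F² y₁, L_F³ y₁)` equals `ρ³` everywhere; in
particular for `ρ ≠ 0` the dyad is fully observable from measurements at a single
node. -/
theorem dyadY_obsDet_x2y4_node1 (a b c ρ : ℝ) :
    (∀ p : Fin 6 → ℝ, obsDet (PhiX2Y4 (dyadY a b c ρ)) p = ρ ^ 3) ∧
    (ρ ≠ 0 → ∀ p : Fin 6 → ℝ, obsDet (PhiX2Y4 (dyadY a b c ρ)) p ≠ 0) := by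
  have e1x : lieD (dyadY a b c ρ) 1 (fun r => r 0) = fun q => -q 1 - q 2 := by
    funext q
    show fderiv ℝ (fun r : Fin 6 → ℝ => r 0) q (dyadY a b c ρ q) = _
    rw [(hasFDerivAt_apply (0 : Fin 6) q).fderiv]
    simp [dyadY]
  have e1y : lieD (dyadY a b c ρ) 1 (fun r => r 1) = L1f a ρ := by
    funext q
    show fderiv ℝ (fun r : Fin 6 → ℝ => r 1) q (dyadY a b c ρ q) = _
    rw [(hasFDerivAt_apply (1 : Fin 6) q).fderiv]
    simp [dyadY, L1f]
  have e2y : lieD (dyadY a b c ρ) 2 (fun r => r 1) = L2f a ρ := by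
    have h2 : lieD (dyadY a b c ρ) 2 (fun r => r 1) =
        fun q => fderiv ℝ (lieD (dyadY a b c ρ) 1 (fun r => r 1)) q (dyadY a b c ρ q) := rfl
    rw [h2]
    funext q
    rw [e1y, (hD3 a ρ q).fderiv]
    simp [D3, dyadY, L2f, L1f, M1f]
  have e3y : lieD (dyadY a b c ρ) 3 (fun r => r 1) = L3f a b c ρ := by
    have h3 : lieD (dyadY a b c ρ) 3 (fun r => r 1) =
        fun q => fderiv ℝ (lieD (dyadY a b c ρ) 2 (fun r => r 1)) q (dyadY a b c ρ q) := rfl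
    rw [h3]
    funext q
    rw [e2y, (hD4 a ρ q).fderiv]
    simp [D4, D3, D3', dyadY, L3f, M2f, L2f, L1f, M1f, F2f]
    ring
  have hΦ : PhiX2Y4 (dyadY a b c ρ) =
      fun q => ![q 0, -q 1 - q 2, q 1, L1f a ρ q, L2f a ρ q, L3f a b c ρ q] := by
    funext q
    simp only [PhiX2Y4, e1x, e1y, e2y, e3y]
    rfl
  have key : ∀ p : Fin 6 → ℝ, obsDet (PhiX2Y4 (dyadY a b c ρ)) p = ρ ^ 3 := by
    intro p
    have hJ : HasFDerivAt
        (fun q : Fin 6 → ℝ => ![q 0, -q 1 - q 2, q 1, L1f a ρ q, L2f a ρ q, L3f a b c ρ q])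
        (ContinuousLinearMap.pi ![prj 0, -prj 1 - prj 2, prj 1, D3 a ρ, D4 a ρ, D5 a c ρ p])
        p := by
      apply hasFDerivAt_pi''
      intro i
      rw [ContinuousLinearMap.proj_pi]
      fin_cases i
      · exact hasFDerivAt_apply 0 p
      · exact (hasFDerivAt_apply 1 p).neg.sub (hasFDerivAt_apply 2 p)
      · exact hasFDerivAt_apply 1 p
      · exact hD3 a ρ p
      · exact hD4 a ρ p
      · exact hD5 a b c ρ p
    have hEq : (ContinuousLinearMap.pi
        ![prj 0, -prj 1 - prj 2, prj 1, D3 a ρ, D4 a ρ, D5 a c ρ p]) =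
        LinearMap.toContinuousLinearMap (Matrix.toLin' (Mex a c ρ p)) := by
      refine ContinuousLinearMap.ext fun v => funext fun j => ?_
      fin_cases j <;>
        · simp [Mex, Matrix.toLin'_apply, Matrix.mulVec, dotProduct,
            Fin.sum_univ_six, Matrix.cons_val_succ, D5, D4, D4', D3, D3', Dq]
          try ring
    rw [obsDet, hΦ, hJ.fderiv, hEq, LinearMap.coe_toContinuousLinearMap,
      ← LinearMap.det_toMatrix', LinearMap.toMatrix'_toLin']
    simp +decide [Mex, Matrix.det_succ_row_zero, Fin.sum_univ_succ, Fin.succAbove]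
    ring
  exact ⟨key, fun hρ p => by rw [key p]; exact pow_ne_zero 3 hρ⟩
end
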